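/- Optimal value rescaling: for every history h ∈ H with τ = g(h), the optimal values satisfy V̲*(τ) = λ^(d-1) V*(h). -/

import Mathlib

/-- Finite interaction histories: an initial observation-reward pair followed by a
list of (decision, observation, reward) triples. -/
abbrev Hist (O R A : Type) : Type := (O × R) × List (A × O × R)

namespace Seq

variable {O R A B : Type} {m : ℕ}

/-- The most recent observation of a history. -/
def lastObs (h : Hist O R A) : O :=
  match h.2.getLast? with
  | some s => s.2.1
  | none => h.1.1

/-- Extending a history by one interaction step. -/
def ext (h : Hist O R A) (a : A) (o : O) (r : R) : Hist O R A :=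
  (h.1, h.2 ++ [(a, o, r)])

/-- Appending a block of steps to a history. -/
def app (τ : Hist O R B) (l : List (B × O × R)) : Hist O R B := (τ.1, τ.2 ++ l)

/-- `inter x o r⊥ i` is the interleaved block `⟨x o r⊥⟩_{<i}`: the first `i`
decision symbols of the code `x ∈ B^(m+1)`, each followed by the dummy
observation `o` and dummy reward `r⊥`. -/
def inter (x : Fin (m + 1) → B) (o : O) (rbot : R) (i : ℕ) : List (B × O × R) :=
  ((List.ofFn x).take i).map fun b => (b, o, rbot)

/-- The body of the history transformation `g`, keeping track of the current last
observation. Each original step `(a, o', r')` taken at last observation `o` is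
replaced by `C(a)₁ o r⊥ … C(a)_{d-1} o r⊥ C(a)_d o' r'` with `d = m + 1`. -/
def gList (C : A → Fin (m + 1) → B) (rbot : R) : O → List (A × O × R) → List (B × O × R)
  | _, [] => []
  | o, (a, o', r') :: t =>
      (inter (C a) o rbot m ++ [(C a (Fin.last m), o', r')]) ++ gList C rbot o' t

/-- The history transformation function `g : H → H̲` sequentializing each action
into its `B`-ary code. -/
def g (C : A → Fin (m + 1) → B) (rbot : R) (h : Hist O R A) : Hist O R B :=
  (h.1, gList C rbot h.1.1 h.2)

end Seq

/-! Write `Δ h = V̲*(g h) - λ^m V*(h)`. Inside a block the sequentialized environment answers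
deterministically with the dummy percept and reward `0`, so unrolling the `m` dummy steps gives
`V̲*(g h) = λ^m max_x Q̲*(g h ⟨x o r⊥⟩_{<m}, x_d)`. At the end of the block `P̲` agrees with `P`,
and comparing the two Bellman equations (`γ = λ^m λ`) shows that this `Q̲*` differs from
`Q*(h, D x)` by `λ` times a `P`-average of `Δ` over the next histories. Hence
`sup |Δ| ≤ γ sup |Δ|`, and since `Δ` is bounded and `γ < 1`, `Δ = 0`. -/

theorem abs_ciSup_le {ι : Type*} [Nonempty ι] {f : ι → ℝ} {M : ℝ} (hf : ∀ i, |f i| ≤ M) :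
    |⨆ i, f i| ≤ M := by
  have hbdd : BddAbove (Set.range f) := ⟨M, by rintro _ ⟨i, rfl⟩; exact (abs_le.1 (hf i)).2⟩
  obtain ⟨i⟩ := ‹Nonempty ι›
  exact abs_le.2 ⟨le_ciSup_of_le hbdd i (abs_le.1 (hf i)).1, ciSup_le fun i => (abs_le.1 (hf i)).2⟩

theorem abs_ciSup_sub_ciSup_le {ι : Type*} [Finite ι] [Nonempty ι] {f g : ι → ℝ} {c : ℝ}
    (h : ∀ i, |f i - g i| ≤ c) : |(⨆ i, f i) - ⨆ i, g i| ≤ c := by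
  refine abs_sub_le_iff.2 ⟨?_, ?_⟩ <;> rw [sub_le_iff_le_add] <;> refine ciSup_le fun i => ?_
  · linarith [(abs_sub_le_iff.1 (h i)).1, le_ciSup (Finite.bddAbove_range g) i]
  · linarith [(abs_sub_le_iff.1 (h i)).2, le_ciSup (Finite.bddAbove_range f) i]

theorem abs_sum_mul_le_of_sum_eq_one {ι : Type*} [Fintype ι] {p u : ι → ℝ} {c : ℝ}
    (hp0 : ∀ i, 0 ≤ p i) (hp1 : ∑ i, p i = 1) (hu : ∀ i, |u i| ≤ c) :
    |∑ i, p i * u i| ≤ c :=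
  calc |∑ i, p i * u i| ≤ ∑ i, |p i * u i| := Finset.abs_sum_le_sum_abs _ _
    _ ≤ ∑ i, p i * c := Finset.sum_le_sum fun i _ => by
        rw [abs_mul, abs_of_nonneg (hp0 i)]
        exact mul_le_mul_of_nonneg_left (hu i) (hp0 i)
    _ = c := by rw [← Finset.sum_mul, hp1, one_mul]

theorem eq_zero_of_forall_abs_le_mul {X : Type*} {f : X → ℝ} {γ : ℝ} (hγ : γ < 1)
    (hbdd : ∃ M, ∀ x, |f x| ≤ M) (hcontr : ∀ Δ, (∀ x, |f x| ≤ Δ) → ∀ x, |f x| ≤ γ * Δ)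
    (x : X) : f x = 0 := by
  obtain ⟨M, hM⟩ := hbdd
  have : Nonempty X := ⟨x⟩
  have hle : ∀ y, |f y| ≤ ⨆ z, |f z| :=
    le_ciSup ⟨M, by rintro _ ⟨z, rfl⟩; exact hM z⟩
  have hself : (⨆ z, |f z|) ≤ γ * ⨆ z, |f z| := ciSup_le (hcontr _ hle)
  have hnonneg : 0 ≤ ⨆ z, |f z| := (abs_nonneg _).trans (hle x)
  have hzero : (⨆ z, |f z|) ≤ 0 := by nlinarith
  exact abs_nonpos_iff.1 ((hle x).trans hzero)

theorem iSup_eq_pow_mul_iSup_ofFn {B : Type*} [Finite B] [Nonempty B] {lam : ℝ}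
    (hlam : 0 ≤ lam) (m : ℕ) (W : List B → B → ℝ)
    (hW : ∀ p : List B, p.length < m → ∀ b, W p b = lam * ⨆ b', W (p ++ [b]) b') :
    ⨆ b, W [] b = lam ^ m * ⨆ y : Fin (m + 1) → B, W ((List.ofFn y).take m) (y (Fin.last m)) := by
  induction m generalizing W with
  | zero =>
    rw [pow_zero, one_mul, ← (Equiv.funUnique (Fin 1) B).iSup_comp]
    rfl
  | succ m ih =>
    have hstep : ∀ b, lam * ⨆ b', W [b] b'
        = lam ^ (m + 1) * ⨆ y : Fin (m + 1) → B,
            W (b :: (List.ofFn y).take m) (y (Fin.last m)) := fun b => by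
      rw [ih (fun p => W (b :: p)) fun p hp c => hW (b :: p) (by simpa using hp) c, pow_succ]
      ring
    calc ⨆ b, W [] b = ⨆ b, lam * ⨆ b', W [b] b' := iSup_congr fun b => hW [] (by simp) b
      _ = lam ^ (m + 1) * ⨆ b, ⨆ y : Fin (m + 1) → B,
            W (b :: (List.ofFn y).take m) (y (Fin.last m)) := by
        simp_rw [hstep, Real.mul_iSup_of_nonneg (pow_nonneg hlam _)]
      _ = _ := by
        rw [← (Fin.consEquiv fun _ => B).iSup_comp, Finite.ciSup_prod]
        simp [List.ofFn_succ]

namespace Seq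

variable {O R A B : Type} {m : ℕ}

def lastObsFrom (o : O) (l : List (A × O × R)) : O :=
  (l.getLast?.map fun s => s.2.1).getD o

theorem lastObs_eq_lastObsFrom (h : Hist O R A) : lastObs h = lastObsFrom h.1.1 h.2 := by
  unfold lastObs lastObsFrom; cases h.2.getLast? <;> rfl

theorem lastObsFrom_append (o : O) (l₁ l₂ : List (A × O × R)) :
    lastObsFrom o (l₁ ++ l₂) = lastObsFrom (lastObsFrom o l₁) l₂ := by
  unfold lastObsFrom; rw [List.getLast?_append]; cases l₂.getLast? <;> simp

theorem lastObsFrom_concat (o : O) (l : List (A × O × R)) (s : A × O × R) :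
    lastObsFrom o (l ++ [s]) = s.2.1 := by
  simp [lastObsFrom]

theorem lastObsFrom_cons (o : O) (s : A × O × R) (t : List (A × O × R)) :
    lastObsFrom o (s :: t) = lastObsFrom s.2.1 t := by
  rw [← List.singleton_append, lastObsFrom_append, ← List.nil_append [s], lastObsFrom_concat]

theorem lastObsFrom_map_const (o : O) (r : R) (p : List B) :
    lastObsFrom o (p.map fun b => (b, o, r)) = o := by
  cases p using List.reverseRecOn <;> simp [lastObsFrom]

theorem gList_append_singleton (C : A → Fin (m + 1) → B) (rbot : R) (o : O)
    (l : List (A × O × R)) (a : A) (o' : O) (r' : R) :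
    gList C rbot o (l ++ [(a, o', r')]) = gList C rbot o l
      ++ (inter (C a) (lastObsFrom o l) rbot m ++ [(C a (Fin.last m), o', r')]) := by
  induction l generalizing o with
  | nil => simp [gList, lastObsFrom]
  | cons s t ih =>
    obtain ⟨b, o₂, r₂⟩ := s
    simp [gList, lastObsFrom_cons, ih]

theorem lastObsFrom_gList (C : A → Fin (m + 1) → B) (rbot : R) (o : O) (l : List (A × O × R)) :
    lastObsFrom o (gList C rbot o l) = lastObsFrom o l := by
  induction l generalizing o with
  | nil => rfl
  | cons s t ih =>
    obtain ⟨a, o₂, r₂⟩ := s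
    rw [gList, lastObsFrom_append, lastObsFrom_concat, ih, lastObsFrom_cons]

theorem length_gList (C : A → Fin (m + 1) → B) (rbot : R) (o : O) (l : List (A × O × R)) :
    (gList C rbot o l).length = (m + 1) * l.length := by
  induction l generalizing o with
  | nil => rfl
  | cons s t ih =>
    obtain ⟨a, o₂, r₂⟩ := s
    simp [gList, inter, ih]
    ring

theorem app_nil (τ : Hist O R B) : app τ [] = τ := by
  simp [app]

theorem ext_app (τ : Hist O R B) (l : List (B × O × R)) (b : B) (o : O) (r : R) :
    ext (app τ l) b o r = app τ (l ++ [(b, o, r)]) := by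
  simp [ext, app]

theorem length_app_g (C : A → Fin (m + 1) → B) (rbot : R) (h : Hist O R A)
    (l : List (B × O × R)) :
    (app (g C rbot h) l).2.length = (m + 1) * h.2.length + l.length := by
  simp [app, g, length_gList]

theorem lastObs_app_g (C : A → Fin (m + 1) → B) (rbot : R) (h : Hist O R A) (p : List B) :
    lastObs (app (g C rbot h) (p.map fun b => (b, lastObs h, rbot))) = lastObs h := by
  rw [lastObs_eq_lastObsFrom, app, g, lastObsFrom_append, lastObsFrom_gList,
    ← lastObs_eq_lastObsFrom, lastObsFrom_map_const]

theorem g_ext (C : A → Fin (m + 1) → B) (rbot : R) (h : Hist O R A) (a : A) (o' : O) (r' : R) :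
    g C rbot (ext h a o' r')
      = ext (app (g C rbot h) (inter (C a) (lastObs h) rbot m)) (C a (Fin.last m)) o' r' := by
  simp [g, ext, app, gList_append_singleton, lastObs_eq_lastObsFrom]

section Bellman

variable [Fintype O] [Fintype R] {ρ : R → ℝ} {rbot : R} {lam : ℝ}
  {Pb : Hist O R B → B → (O × R) → ℝ} {Qb : Hist O R B → B → ℝ}

theorem Qb_eq_mul_iSup_of_inside_block [DecidableEq O] [DecidableEq R] (hρ : ρ rbot = 0)
    (hPbpartial : ∀ τ : Hist O R B, (τ.2.length + 1) % (m + 1) ≠ 0 → ∀ x o' r',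
      Pb τ x (o', r') = if o' = lastObs τ ∧ r' = rbot then 1 else 0)
    (hQbOBE : ∀ τ x, Qb τ x = ∑ o' : O, ∑ r' : R,
      Pb τ x (o', r') * (ρ r' + lam * ⨆ x', Qb (ext τ x o' r') x'))
    {τ : Hist O R B} (hτ : (τ.2.length + 1) % (m + 1) ≠ 0) (b : B) :
    Qb τ b = lam * ⨆ b', Qb (ext τ b (lastObs τ) rbot) b' := by
  simp [hQbOBE τ b, hPbpartial τ hτ, ite_and, hρ]

theorem iSup_Qb_g_eq [Finite B] [Nonempty B] [DecidableEq O] [DecidableEq R] (hρ : ρ rbot = 0)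
    (hlam : 0 ≤ lam)
    (hPbpartial : ∀ τ : Hist O R B, (τ.2.length + 1) % (m + 1) ≠ 0 → ∀ x o' r',
      Pb τ x (o', r') = if o' = lastObs τ ∧ r' = rbot then 1 else 0)
    (hQbOBE : ∀ τ x, Qb τ x = ∑ o' : O, ∑ r' : R,
      Pb τ x (o', r') * (ρ r' + lam * ⨆ x', Qb (ext τ x o' r') x'))
    (C : A → Fin (m + 1) → B) (h : Hist O R A) :
    ⨆ x, Qb (g C rbot h) x = lam ^ m * ⨆ y : Fin (m + 1) → B,
      Qb (app (g C rbot h) (inter y (lastObs h) rbot m)) (y (Fin.last m)) := by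
  have hunroll := iSup_eq_pow_mul_iSup_ofFn hlam m
    (fun p => Qb (app (g C rbot h) (p.map fun b => (b, lastObs h, rbot)))) fun p hp b => by
      have hτ : ((app (g C rbot h) (p.map fun b => (b, lastObs h, rbot))).2.length + 1)
          % (m + 1) ≠ 0 := by
        rw [length_app_g, List.length_map, add_assoc, Nat.mul_add_mod,
          Nat.mod_eq_of_lt (by omega)]
        omega
      rw [Qb_eq_mul_iSup_of_inside_block hρ hPbpartial hQbOBE hτ, lastObs_app_g, ext_app,
        List.map_append, List.map_singleton]
  simp only [List.map_nil, app_nil] at hunroll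
  exact hunroll

theorem Qb_block_end_sub_Q {γ : ℝ} (hlamd : lam ^ (m + 1) = γ)
    {P : Hist O R A → A → (O × R) → ℝ} {Q : Hist O R A → A → ℝ}
    (hQOBE : ∀ h a, Q h a = ∑ o' : O, ∑ r' : R,
      P h a (o', r') * (ρ r' + γ * ⨆ a', Q (ext h a o' r') a'))
    (hQbOBE : ∀ τ x, Qb τ x = ∑ o' : O, ∑ r' : R,
      Pb τ x (o', r') * (ρ r' + lam * ⨆ x', Qb (ext τ x o' r') x'))
    (C : A → Fin (m + 1) → B)
    (hPbcomplete : ∀ (h : Hist O R A) (a : A) (o' : O) (r' : R),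
      Pb (app (g C rbot h) (inter (C a) (lastObs h) rbot m)) (C a (Fin.last m)) (o', r')
        = P h a (o', r'))
    (h : Hist O R A) (a : A) :
    Qb (app (g C rbot h) (inter (C a) (lastObs h) rbot m)) (C a (Fin.last m)) - Q h a
      = lam * ∑ y : O × R, P h a y * ((⨆ x, Qb (g C rbot (ext h a y.1 y.2)) x)
          - lam ^ m * ⨆ a', Q (ext h a y.1 y.2) a') := by
  rw [hQbOBE, hQOBE, Fintype.sum_prod_type, Finset.mul_sum, ← Finset.sum_sub_distrib]
  refine Finset.sum_congr rfl fun o' _ => ?_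
  rw [Finset.mul_sum, ← Finset.sum_sub_distrib]
  refine Finset.sum_congr rfl fun r' _ => ?_
  rw [hPbcomplete, ← g_ext, ← hlamd]
  ring

end Bellman

end Seq

theorem optimal_value_rescaling_general {O R A B : Type} [Fintype O] [Fintype R]
    [Fintype B] [DecidableEq O] [DecidableEq R] [Nonempty A] [Nonempty B]
    {m : ℕ}
    (ρ : R → ℝ) (rbot : R) (hρ : ρ rbot = 0)
    (γ lam : ℝ) (hγ1 : γ < 1) (hlam0 : 0 ≤ lam)
    (hlamd : lam ^ (m + 1) = γ)
    (C : A → Fin (m + 1) → B) (D : (Fin (m + 1) → B) → A)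
    (hDC : ∀ a, D (C a) = a) (hCD : ∀ x, C (D x) = x)
    (P : Hist O R A → A → (O × R) → ℝ)
    (hP0 : ∀ h a y, 0 ≤ P h a y) (hP1 : ∀ h a, ∑ y : O × R, P h a y = 1)
    (Q : Hist O R A → A → ℝ) (hQbdd : ∃ M, ∀ h a, |Q h a| ≤ M)
    (hQOBE : ∀ h a, Q h a = ∑ o' : O, ∑ r' : R,
        P h a (o', r') * (ρ r' + γ * ⨆ a', Q (Seq.ext h a o' r') a'))
    (Pb : Hist O R B → B → (O × R) → ℝ)
    (hPbpartial : ∀ τ : Hist O R B, (τ.2.length + 1) % (m + 1) ≠ 0 → ∀ x o' r',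
        Pb τ x (o', r') = if o' = Seq.lastObs τ ∧ r' = rbot then 1 else 0)
    (hPbcomplete : ∀ (h : Hist O R A) (a : A) (o' : O) (r' : R),
        Pb (Seq.app (Seq.g C rbot h) (Seq.inter (C a) (Seq.lastObs h) rbot m))
            (C a (Fin.last m)) (o', r')
          = P h a (o', r'))
    (Qb : Hist O R B → B → ℝ) (hQbbdd : ∃ M, ∀ τ x, |Qb τ x| ≤ M)
    (hQbOBE : ∀ τ x, Qb τ x = ∑ o' : O, ∑ r' : R,
        Pb τ x (o', r') * (ρ r' + lam * ⨆ x', Qb (Seq.ext τ x o' r') x')) :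
    ∀ h : Hist O R A, (⨆ x, Qb (Seq.g C rbot h) x) = lam ^ m * ⨆ a, Q h a := by
  obtain ⟨MQ, hMQ⟩ := hQbdd
  obtain ⟨MQb, hMQb⟩ := hQbbdd
  have hlm : 0 ≤ lam ^ m := pow_nonneg hlam0 m
  refine fun h => sub_eq_zero.1 (eq_zero_of_forall_abs_le_mul hγ1
    (f := fun h' => (⨆ x, Qb (Seq.g C rbot h') x) - lam ^ m * ⨆ a, Q h' a)
    ⟨MQb + lam ^ m * MQ, fun h' => ?_⟩ (fun Δ hΔ h' => ?_) h)
  · refine (abs_sub _ _).trans (add_le_add (abs_ciSup_le fun x => hMQb _ x) ?_)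
    rw [abs_mul, abs_of_nonneg hlm]
    exact mul_le_mul_of_nonneg_left (abs_ciSup_le fun a => hMQ h' a) hlm
  · rw [Seq.iSup_Qb_g_eq hρ hlam0 hPbpartial hQbOBE,
      ← (Function.LeftInverse.surjective hDC).iSup_comp (Q h'), ← mul_sub, abs_mul,
      abs_of_nonneg hlm, ← hlamd, pow_succ, mul_assoc]
    refine mul_le_mul_of_nonneg_left (abs_ciSup_sub_ciSup_le fun y => ?_) hlm
    have hblock := Seq.Qb_block_end_sub_Q hlamd hQOBE hQbOBE C hPbcomplete h' (D y)
    rw [hCD] at hblock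
    rw [hblock, abs_mul, abs_of_nonneg hlam0]
    exact mul_le_mul_of_nonneg_left
      (abs_sum_mul_le_of_sum_eq_one (hP0 h' _) (hP1 h' _) fun _ => hΔ _) hlam0

/-- Optimal value rescaling. Let `Q*` (resp. `Q̲*`) be the bounded
optimal action-value function of the original environment `P` with discount `γ`
(resp. of the sequentialized environment `P̲` with discount `λ`, `λ^d = γ`,
`ρ r⊥ = 0`), so that `V*(h) = max_a Q*(h,a)` and `V̲*(τ) = max_x Q̲*(τ,x)`. Then
for every history `h` with `τ = g(h)`: `V̲*(τ) = λ^(d-1) V*(h)`. -/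
theorem optimal_value_rescaling {O R A B : Type} [Fintype O] [Fintype R]
    [Fintype A] [Fintype B] [DecidableEq O] [DecidableEq R] [Nonempty A] [Nonempty B]
    {m : ℕ}
    (ρ : R → ℝ) (rbot : R) (hρ : ρ rbot = 0)
    (γ lam : ℝ) (hγ0 : 0 ≤ γ) (hγ1 : γ < 1) (hlam0 : 0 ≤ lam)
    (hlamd : lam ^ (m + 1) = γ)
    (C : A → Fin (m + 1) → B) (D : (Fin (m + 1) → B) → A)
    (hDC : ∀ a, D (C a) = a) (hCD : ∀ x, C (D x) = x)
    (P : Hist O R A → A → (O × R) → ℝ)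
    (hP0 : ∀ h a y, 0 ≤ P h a y) (hP1 : ∀ h a, ∑ y : O × R, P h a y = 1)
    (Q : Hist O R A → A → ℝ) (hQbdd : ∃ M, ∀ h a, |Q h a| ≤ M)
    (hQOBE : ∀ h a, Q h a = ∑ o' : O, ∑ r' : R,
        P h a (o', r') * (ρ r' + γ * ⨆ a', Q (Seq.ext h a o' r') a'))
    (Pb : Hist O R B → B → (O × R) → ℝ)
    (hPb0 : ∀ τ x y, 0 ≤ Pb τ x y) (hPb1 : ∀ τ x, ∑ y : O × R, Pb τ x y = 1)
    (hPbpartial : ∀ τ : Hist O R B, (τ.2.length + 1) % (m + 1) ≠ 0 → ∀ x o' r',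
        Pb τ x (o', r') = if o' = Seq.lastObs τ ∧ r' = rbot then 1 else 0)
    (hPbcomplete : ∀ (h : Hist O R A) (a : A) (o' : O) (r' : R),
        Pb (Seq.app (Seq.g C rbot h) (Seq.inter (C a) (Seq.lastObs h) rbot m))
            (C a (Fin.last m)) (o', r')
          = P h a (o', r'))
    (Qb : Hist O R B → B → ℝ) (hQbbdd : ∃ M, ∀ τ x, |Qb τ x| ≤ M)
    (hQbOBE : ∀ τ x, Qb τ x = ∑ o' : O, ∑ r' : R,
        Pb τ x (o', r') * (ρ r' + lam * ⨆ x', Qb (Seq.ext τ x o' r') x')) :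
    ∀ h : Hist O R A, (⨆ x, Qb (Seq.g C rbot h) x) = lam ^ m * ⨆ a, Q h a :=
  optimal_value_rescaling_general ρ rbot hρ γ lam hγ1 hlam0 hlamd C D hDC hCD P hP0 hP1 Q hQbdd
    hQOBE Pb hPbpartial hPbcomplete Qb hQbbdd hQbOBE
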